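/- Let E be a real reflexive Banach space, X ⊆ E a closed convex set, f : X → X sequentially weakly-strongly continuous with limsup_{‖x‖→∞} ‖f(x)‖/‖x‖ < 1/2, and assume that for each y ∈ X the function x ↦ ‖x − f(x)‖ − ‖y − f(x)‖ has at most one global minimum in X. Then f has a unique fixed point x* ∈ X, and moreover ‖x* − f(x)‖ < ‖x − f(x)‖ for all x ∈ X with x ≠ x*. -/

import Mathlib

/-! Write `Φ_y x = ‖x - f x‖ - ‖y - f x‖` and `m y = inf_X Φ_y ≤ Φ_y y = 0`. The growth bound makes
the sublevel sets of `Φ_y` bounded and weak-strong continuity makes `Φ_y` weakly sequentially lower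
semicontinuous, so `Φ_y` attains its minimum; likewise `m` is weakly upper semicontinuous and
attains its maximum `μ` at some `y`. Let `z₀` minimize `Φ_y` and put `w = f z₀`. As `Φ_y x` is
concave in `y`, a minimizer `z_t` of `Φ` at `(1 - t) y + t w` has `Φ_w z_t ≤ μ` and
`Φ_y z_t ≤ μ + O(t)`. A weak limit `x` of the `z_t` therefore minimizes `Φ_y`, so `x = z₀` and
`‖x - f x‖ = Φ_w x ≤ μ ≤ 0`. Thus `f x = x`, `μ = 0`, and `-‖y - x‖ = Φ_y x = μ` gives `y = x`.
Finally `Φ_y ≥ 0 = Φ_y y`, and any `x` with `‖y - f x‖ ≥ ‖x - f x‖` is a second minimizer. -/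

open Filter Topology Bornology

section WeakConvergence

variable {E : Type*} [NormedAddCommGroup E] [NormedSpace ℝ E]

def WeakSeqTendsto (u : ℕ → E) (z : E) : Prop :=
  ∀ φ : E →L[ℝ] ℝ, Tendsto (fun n => φ (u n)) atTop (𝓝 (φ z))

variable (E) in
def BoundedSeqWeaklySubconvergent : Prop :=
  ∀ u : ℕ → E, IsBounded (Set.range u) →
    ∃ (z : E) (σ : ℕ → ℕ), StrictMono σ ∧ WeakSeqTendsto (fun n => u (σ n)) z

def SeqWeakStrongContinuousOn (f : E → E) (X : Set E) : Prop :=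
  ∀ x ∈ X, ∀ u : ℕ → E, (∀ n, u n ∈ X) → WeakSeqTendsto u x →
    Tendsto (fun n => f (u n)) atTop (𝓝 (f x))

theorem WeakSeqTendsto.mem_of_isClosed_of_convex {X : Set E} (hX : IsClosed X)
    (hXc : Convex ℝ X) {u : ℕ → E} {z : E} (hu : WeakSeqTendsto u z) (huX : ∀ n, u n ∈ X) :
    z ∈ X := by
  by_contra hz
  obtain ⟨φ, s, hφz, hφX⟩ := geometric_hahn_banach_point_closed hXc hX hz
  exact (ge_of_tendsto (hu φ) (.of_forall fun n => (hφX _ (huX n)).le)).not_gt hφz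

theorem WeakSeqTendsto.norm_sub_le {u v : ℕ → E} {z l : E} {b : ℕ → ℝ} {B : ℝ}
    (hu : WeakSeqTendsto u z) (hv : Tendsto v atTop (𝓝 l)) (hb : Tendsto b atTop (𝓝 B))
    (hle : ∀ᶠ n in atTop, ‖u n - v n‖ ≤ b n) : ‖z - l‖ ≤ B := by
  obtain ⟨φ, hφ, hφzl⟩ := exists_dual_vector'' ℝ (z - l)
  have hlim : Tendsto (fun n => φ (u n - v n)) atTop (𝓝 (φ (z - l))) := by
    simpa only [map_sub, Function.comp_def] using (hu φ).sub ((φ.continuous.tendsto l).comp hv)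
  rw [hφzl] at hlim
  refine le_of_tendsto_of_tendsto hlim hb (hle.mono fun n hn => ?_)
  calc φ (u n - v n) ≤ ‖φ (u n - v n)‖ := Real.le_norm_self _
    _ ≤ ‖φ‖ * ‖u n - v n‖ := φ.le_opNorm _
    _ ≤ ‖u n - v n‖ := mul_le_of_le_one_left (norm_nonneg _) hφ
    _ ≤ b n := hn

end WeakConvergence

section DisplacementGap

variable {E : Type*} [NormedAddCommGroup E] (f : E → E)

def displacementGap (y x : E) : ℝ := ‖x - f x‖ - ‖y - f x‖

@[simp]
theorem displacementGap_self (x : E) : displacementGap f x x = 0 :=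
  sub_self _

theorem displacementGap_le_add_dist (y y' x : E) :
    displacementGap f y x ≤ displacementGap f y' x + dist y y' := by
  have := norm_sub_le_norm_sub_add_norm_sub y' y (f x)
  rw [dist_comm, dist_eq_norm]
  unfold displacementGap
  linarith

theorem neg_dist_le_displacementGap (y x : E) : -dist x y ≤ displacementGap f y x := by
  linarith [displacementGap_le_add_dist f x y x, displacementGap_self f x]

theorem le_displacementGap_of_norm_apply_le {c : ℝ} {x : E} (y : E) (hfx : ‖f x‖ ≤ c * ‖x‖) :
    (1 - 2 * c) * ‖x‖ - ‖y‖ ≤ displacementGap f y x := by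
  have h₁ := norm_sub_norm_le x (f x)
  have h₂ := norm_sub_le y (f x)
  unfold displacementGap
  linarith

variable {f} {X : Set E} {c R : ℝ}

theorem norm_le_of_displacementGap_le (hc : c < 1 / 2)
    (hgrow : ∀ x ∈ X, R ≤ ‖x‖ → ‖f x‖ ≤ c * ‖x‖) {x y : E} {M : ℝ} (hx : x ∈ X)
    (h : displacementGap f y x ≤ M) : ‖x‖ ≤ max R ((M + ‖y‖) / (1 - 2 * c)) := by
  rcases le_or_gt R ‖x‖ with hR | hR
  · refine le_max_of_le_right ((le_div_iff₀ (by linarith)).2 ?_)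
    linarith [le_displacementGap_of_norm_apply_le f y (hgrow x hx hR)]
  · exact le_max_of_le_left hR.le

theorem isBounded_displacementGap_le (hc : c < 1 / 2)
    (hgrow : ∀ x ∈ X, R ≤ ‖x‖ → ‖f x‖ ≤ c * ‖x‖) (y : E) (M : ℝ) :
    IsBounded {x ∈ X | displacementGap f y x ≤ M} :=
  isBounded_iff_forall_norm_le.2 ⟨_, fun _ hx => norm_le_of_displacementGap_le hc hgrow hx.1 hx.2⟩

theorem bddBelow_displacementGap (hc : c < 1 / 2)
    (hgrow : ∀ x ∈ X, R ≤ ‖x‖ → ‖f x‖ ≤ c * ‖x‖) (y : E) :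
    BddBelow (displacementGap f y '' X) := by
  refine ⟨-(|R| + ‖y‖), ?_⟩
  rintro _ ⟨x, hx, rfl⟩
  rcases le_or_gt R ‖x‖ with hR | hR
  · have := le_displacementGap_of_norm_apply_le f y (hgrow x hx hR)
    nlinarith [norm_nonneg x, abs_nonneg R]
  · have := neg_dist_le_displacementGap f y x
    have := dist_le_norm_add_norm x y
    linarith [le_abs_self R]

variable (f X) in
noncomputable def minGap (y : E) : ℝ := sInf (displacementGap f y '' X)

theorem minGap_le (hc : c < 1 / 2) (hgrow : ∀ x ∈ X, R ≤ ‖x‖ → ‖f x‖ ≤ c * ‖x‖) {x : E}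
    (y : E) (hx : x ∈ X) : minGap f X y ≤ displacementGap f y x :=
  csInf_le (bddBelow_displacementGap hc hgrow y) (Set.mem_image_of_mem _ hx)

theorem IsMinOn.minGap_eq {y z : E} (h : IsMinOn (displacementGap f y) X z) (hz : z ∈ X) :
    minGap f X y = displacementGap f y z :=
  IsLeast.csInf_eq ⟨Set.mem_image_of_mem _ hz, Set.forall_mem_image.2 (isMinOn_iff.1 h)⟩

end DisplacementGap

section Concavity

variable {E : Type*} [NormedAddCommGroup E] [NormedSpace ℝ E]

theorem concaveOn_displacementGap (f : E → E) (x : E) :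
    ConcaveOn ℝ Set.univ (fun y => displacementGap f y x) := by
  refine ⟨convex_univ, fun y _ w _ a b ha hb hab => ?_⟩
  have hfx : f x = a • f x + b • f x := by rw [← add_smul, hab, one_smul]
  have h : a • y + b • w - f x = a • (y - f x) + b • (w - f x) := by
    conv_lhs => rw [hfx]
    simp only [smul_sub]
    abel
  have := norm_add_le (a • (y - f x)) (b • (w - f x))
  rw [norm_smul_of_nonneg ha, norm_smul_of_nonneg hb, ← h] at this
  have hx : ‖x - f x‖ = a * ‖x - f x‖ + b * ‖x - f x‖ := by rw [← add_mul, hab, one_mul]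
  simp only [displacementGap, smul_eq_mul]
  linarith

end Concavity

section Minimization

variable {E : Type*} [NormedAddCommGroup E] [NormedSpace ℝ E] {f : E → E} {X : Set E}
  {c R : ℝ}

theorem displacementGap_le_of_weakSeqTendsto {u : ℕ → E} {x y : E} {b : ℕ → ℝ} {B : ℝ}
    (hu : WeakSeqTendsto u x) (hfu : Tendsto (fun n => f (u n)) atTop (𝓝 (f x)))
    (hb : Tendsto b atTop (𝓝 B)) (hle : ∀ᶠ n in atTop, displacementGap f y (u n) ≤ b n) :
    displacementGap f y x ≤ B := by
  have hb' : Tendsto (fun n => b n + ‖y - f (u n)‖) atTop (𝓝 (B + ‖y - f x‖)) :=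
    hb.add (tendsto_const_nhds.sub hfu).norm
  have := hu.norm_sub_le hfu hb' (hle.mono fun n hn => by unfold displacementGap at hn; linarith)
  unfold displacementGap
  linarith

theorem exists_isMinOn_displacementGap (hE : BoundedSeqWeaklySubconvergent E)
    (hX : IsClosed X) (hXc : Convex ℝ X) (hfw : SeqWeakStrongContinuousOn f X)
    (hc : c < 1 / 2) (hgrow : ∀ x ∈ X, R ≤ ‖x‖ → ‖f x‖ ≤ c * ‖x‖) (hne : X.Nonempty)
    (y : E) : ∃ z ∈ X, IsMinOn (displacementGap f y) X z := by
  obtain ⟨s, hs_anti, hs, hsX⟩ :=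
    exists_seq_tendsto_sInf (hne.image _) (bddBelow_displacementGap hc hgrow y)
  choose u huX hus using hsX
  have hbdd : IsBounded (Set.range u) :=
    (isBounded_displacementGap_le hc hgrow y (s 0)).subset <| Set.range_subset_iff.2
      fun n => ⟨huX n, (hus n).le.trans (hs_anti (Nat.zero_le n))⟩
  obtain ⟨z, σ, hσ, hz⟩ := hE u hbdd
  have hzX := hz.mem_of_isClosed_of_convex hX hXc fun n => huX (σ n)
  refine ⟨z, hzX, isMinOn_iff.2 fun x hx => ?_⟩
  calc displacementGap f y z ≤ minGap f X y :=
        displacementGap_le_of_weakSeqTendsto hz (hfw z hzX _ (fun n => huX (σ n)) hz)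
          (hs.comp hσ.tendsto_atTop) (.of_forall fun n => (hus (σ n)).le)
    _ ≤ displacementGap f y x := minGap_le hc hgrow y hx

theorem le_minGap_of_weakSeqTendsto (hc : c < 1 / 2)
    (hgrow : ∀ x ∈ X, R ≤ ‖x‖ → ‖f x‖ ≤ c * ‖x‖) (hne : X.Nonempty) {v : ℕ → E} {y : E}
    {b : ℕ → ℝ} {B : ℝ} (hv : WeakSeqTendsto v y) (hb : Tendsto b atTop (𝓝 B))
    (hle : ∀ n, b n ≤ minGap f X (v n)) : B ≤ minGap f X y := by
  refine le_csInf (hne.image _) (Set.forall_mem_image.2 fun x hx => ?_)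
  have : ‖y - f x‖ ≤ ‖x - f x‖ - B := by
    refine hv.norm_sub_le tendsto_const_nhds (tendsto_const_nhds.sub hb) (.of_forall fun n => ?_)
    have := (hle n).trans (minGap_le hc hgrow (v n) hx)
    unfold displacementGap at this
    linarith
  unfold displacementGap
  linarith

theorem exists_isMaxOn_minGap (hE : BoundedSeqWeaklySubconvergent E) (hX : IsClosed X)
    (hXc : Convex ℝ X) (hc : c < 1 / 2) (hgrow : ∀ x ∈ X, R ≤ ‖x‖ → ‖f x‖ ≤ c * ‖x‖)
    (hne : X.Nonempty) : ∃ y ∈ X, IsMaxOn (minGap f X) X y := by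
  have hbdd : BddAbove (minGap f X '' X) :=
    ⟨0, Set.forall_mem_image.2 fun y hy => by simpa using minGap_le hc hgrow y hy⟩
  obtain ⟨s, hs_mono, hs, hsX⟩ := exists_seq_tendsto_sSup (hne.image _) hbdd
  choose v hvX hvs using hsX
  obtain ⟨x₀, hx₀⟩ := hne
  have hv_bdd : IsBounded (Set.range v) := by
    refine isBounded_iff_forall_norm_le.2
      ⟨‖x₀ - f x₀‖ + ‖f x₀‖ - s 0, Set.forall_mem_range.2 fun n => ?_⟩
    have h₁ := (hs_mono (Nat.zero_le n)).trans ((hvs n).ge.trans (minGap_le hc hgrow (v n) hx₀))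
    have h₂ := norm_sub_norm_le (v n) (f x₀)
    unfold displacementGap at h₁
    linarith
  obtain ⟨y, σ, hσ, hy⟩ := hE v hv_bdd
  refine ⟨y, hy.mem_of_isClosed_of_convex hX hXc fun n => hvX (σ n), isMaxOn_iff.2 fun y' hy' => ?_⟩
  exact (le_csSup hbdd (Set.mem_image_of_mem _ hy')).trans <|
    le_minGap_of_weakSeqTendsto hc hgrow ⟨x₀, hx₀⟩ hy (hs.comp hσ.tendsto_atTop)
      fun n => (hvs (σ n)).ge

theorem exists_near_minimizer_of_isMaxOn (hE : BoundedSeqWeaklySubconvergent E)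
    (hX : IsClosed X) (hXc : Convex ℝ X) (hfw : SeqWeakStrongContinuousOn f X)
    (hc : c < 1 / 2) (hgrow : ∀ x ∈ X, R ≤ ‖x‖ → ‖f x‖ ≤ c * ‖x‖) {y w : E} (hy : y ∈ X)
    (hw : w ∈ X) (hmax : IsMaxOn (minGap f X) X y) {t : ℝ} (ht₀ : 0 < t) (ht₁ : t ≤ 1) :
    ∃ z ∈ X, displacementGap f w z ≤ minGap f X y ∧
      displacementGap f y z ≤ minGap f X y + t * dist y w := by
  set yt := AffineMap.lineMap y w t
  obtain ⟨z, hzX, hz⟩ := exists_isMinOn_displacementGap hE hX hXc hfw hc hgrow ⟨y, hy⟩ yt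
  have h_above : displacementGap f yt z ≤ minGap f X y := by
    rw [← hz.minGap_eq hzX]
    exact isMaxOn_iff.1 hmax yt (hXc.lineMap_mem hy hw ⟨ht₀.le, ht₁⟩)
  have h_below : minGap f X y ≤ displacementGap f y z := minGap_le hc hgrow y hzX
  refine ⟨z, hzX, ?_, ?_⟩
  · have hconc := (concaveOn_displacementGap f z).2 (Set.mem_univ y) (Set.mem_univ w)
      (sub_nonneg.2 ht₁) ht₀.le (sub_add_cancel 1 t)
    dsimp only at hconc
    rw [← AffineMap.lineMap_apply_module y w t, smul_eq_mul, smul_eq_mul] at hconc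
    nlinarith
  · have := displacementGap_le_add_dist f y yt z
    rw [dist_comm, dist_lineMap_left, Real.norm_of_nonneg ht₀.le] at this
    linarith

theorem fixed_and_isMinOn_self_of_isMaxOn_minGap (hE : BoundedSeqWeaklySubconvergent E)
    (hX : IsClosed X) (hXc : Convex ℝ X) (hf : Set.MapsTo f X X)
    (hfw : SeqWeakStrongContinuousOn f X) (hc : c < 1 / 2)
    (hgrow : ∀ x ∈ X, R ≤ ‖x‖ → ‖f x‖ ≤ c * ‖x‖) {y : E} (hy : y ∈ X)
    (hmax : IsMaxOn (minGap f X) X y)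
    (huniq : ∀ x₁ ∈ X, ∀ x₂ ∈ X, IsMinOn (displacementGap f y) X x₁ →
      IsMinOn (displacementGap f y) X x₂ → x₁ = x₂) :
    f y = y ∧ IsMinOn (displacementGap f y) X y := by
  set μ := minGap f X y
  obtain ⟨z₀, hz₀X, hz₀⟩ := exists_isMinOn_displacementGap hE hX hXc hfw hc hgrow ⟨y, hy⟩ y
  have hn : ∀ n : ℕ, (0 : ℝ) < 1 / (n + 1) ∧ 1 / ((n : ℝ) + 1) ≤ 1 := fun n =>
    ⟨by positivity, div_le_one_of_le₀ (by linarith [n.cast_nonneg (α := ℝ)]) (by positivity)⟩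
  choose z hzX hzw hzy using fun n : ℕ =>
    exists_near_minimizer_of_isMaxOn hE hX hXc hfw hc hgrow hy (hf hz₀X) hmax (hn n).1 (hn n).2
  have hz_bdd : IsBounded (Set.range z) :=
    (isBounded_displacementGap_le hc hgrow (f z₀) μ).subset
      (Set.range_subset_iff.2 fun n => ⟨hzX n, hzw n⟩)
  obtain ⟨x, σ, hσ, hx⟩ := hE z hz_bdd
  have hxX := hx.mem_of_isClosed_of_convex hX hXc fun n => hzX (σ n)
  have hfx := hfw x hxX _ (fun n => hzX (σ n)) hx
  have hx_min : IsMinOn (displacementGap f y) X x := by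
    have ht : Tendsto (fun n : ℕ => μ + 1 / ((σ n : ℝ) + 1) * dist y (f z₀)) atTop (𝓝 μ) := by
      simpa using ((tendsto_one_div_add_atTop_nhds_zero_nat.comp hσ.tendsto_atTop).mul_const
        (dist y (f z₀))).const_add μ
    refine isMinOn_iff.2 fun x' hx' => le_trans ?_ (minGap_le hc hgrow y hx')
    exact displacementGap_le_of_weakSeqTendsto hx hfx ht (.of_forall fun n => hzy (σ n))
  have hfx₀ : f x = f z₀ := congrArg f (huniq x hxX z₀ hz₀X hx_min hz₀)
  have hx_disp : ‖x - f x‖ ≤ μ := by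
    simpa [displacementGap, hfx₀] using
      displacementGap_le_of_weakSeqTendsto hx hfx tendsto_const_nhds (.of_forall fun n => hzw (σ n))
  have hμ : μ ≤ 0 := by simpa using minGap_le hc hgrow y hy
  have hx_fix : f x = x := by
    rw [eq_comm, ← sub_eq_zero, ← norm_le_zero_iff]
    exact hx_disp.trans hμ
  have hyx : y = x := by
    have h := minGap_le hc hgrow y hxX
    rw [displacementGap, hx_fix, sub_self, norm_zero, zero_sub] at h
    rw [← sub_eq_zero, ← norm_le_zero_iff]
    linarith [norm_nonneg (x - f x)]
  refine ⟨by rw [hyx]; exact hx_fix, isMinOn_iff.2 fun x' hx' => ?_⟩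
  rw [displacementGap_self]
  linarith [minGap_le hc hgrow y hx', norm_nonneg (x - f x)]

end Minimization

theorem stmt11_general {E : Type*} [NormedAddCommGroup E] [NormedSpace ℝ E]
    (hrefl : ∀ u : ℕ → E, Bornology.IsBounded (Set.range u) →
      ∃ (z : E) (σ : ℕ → ℕ), StrictMono σ ∧
        ∀ φ : E →L[ℝ] ℝ,
          Filter.Tendsto (fun n => φ (u (σ n))) Filter.atTop (nhds (φ z)))
    (X : Set E) (hne : X.Nonempty) (hclosed : IsClosed X) (hconv : Convex ℝ X)
    (f : E → E) (hf : Set.MapsTo f X X)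
    (hwsc : ∀ x ∈ X, ∀ xn : ℕ → E, (∀ n, xn n ∈ X) →
      (∀ φ : E →L[ℝ] ℝ,
        Filter.Tendsto (fun n => φ (xn n)) Filter.atTop (nhds (φ x))) →
      Filter.Tendsto (fun n => f (xn n)) Filter.atTop (nhds (f x)))
    (hgrowth : ∃ c < (1 : ℝ) / 2, ∃ R > (0 : ℝ),
      ∀ x ∈ X, R ≤ ‖x‖ → ‖f x‖ ≤ c * ‖x‖)
    (huniq : ∀ y ∈ X, ∀ x₁ ∈ X, ∀ x₂ ∈ X,
      (∀ x ∈ X, ‖x₁ - f x₁‖ - ‖y - f x₁‖ ≤ ‖x - f x‖ - ‖y - f x‖) →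
      (∀ x ∈ X, ‖x₂ - f x₂‖ - ‖y - f x₂‖ ≤ ‖x - f x‖ - ‖y - f x‖) →
      x₁ = x₂) :
    ∃! xs, xs ∈ X ∧ f xs = xs ∧
      ∀ x ∈ X, x ≠ xs → ‖xs - f x‖ < ‖x - f x‖ := by
  obtain ⟨c, hc, R, -, hgrow⟩ := hgrowth
  have huniq' : ∀ y ∈ X, ∀ x₁ ∈ X, ∀ x₂ ∈ X, IsMinOn (displacementGap f y) X x₁ →
      IsMinOn (displacementGap f y) X x₂ → x₁ = x₂ := fun y hy x₁ hx₁ x₂ hx₂ h₁ h₂ =>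
    huniq y hy x₁ hx₁ x₂ hx₂ (isMinOn_iff.1 h₁) (isMinOn_iff.1 h₂)
  obtain ⟨y, hy, hmax⟩ := exists_isMaxOn_minGap hrefl hclosed hconv hc hgrow hne
  obtain ⟨hfix, hmin⟩ := fixed_and_isMinOn_self_of_isMaxOn_minGap hrefl hclosed hconv hf hwsc
    hc hgrow hy hmax (huniq' y hy)
  have hstrict : ∀ x ∈ X, x ≠ y → ‖y - f x‖ < ‖x - f x‖ := by
    refine fun x hx hxy => sub_pos.1 (lt_of_not_ge fun hle => hxy ?_)
    refine huniq' y hy x hx y hy (isMinOn_iff.2 fun x' hx' => ?_) hmin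
    exact hle.trans ((displacementGap_self f y).symm.le.trans (isMinOn_iff.1 hmin x' hx'))
  refine ⟨y, ⟨hy, hfix, hstrict⟩, fun x ⟨hx, hfx, _⟩ => by_contra fun hxy => ?_⟩
  have h := hstrict x hx hxy
  rw [hfx, sub_self, norm_zero] at h
  exact (norm_nonneg _).not_gt h

/-- main theorem: E a real reflexive Banach space (reflexivity is
expressed through its sequential consequence, Eberlein–Šmulian: every bounded
sequence has a weakly convergent subsequence), X ⊆ E closed, convex and
unbounded, f : X → X sequentially weakly-strongly continuous with
limsup_{‖x‖→∞} ‖f x‖/‖x‖ < 1/2, and for each y ∈ X the function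
x ↦ ‖x − f x‖ − ‖y − f x‖ has at most one global minimum in X.  Then f has a
unique fixed point x* ∈ X, and ‖x* − f x‖ < ‖x − f x‖ for all x ∈ X, x ≠ x*. -/
theorem stmt11 {E : Type*} [NormedAddCommGroup E] [NormedSpace ℝ E]
    [CompleteSpace E]
    (hrefl : ∀ u : ℕ → E, Bornology.IsBounded (Set.range u) →
      ∃ (z : E) (σ : ℕ → ℕ), StrictMono σ ∧
        ∀ φ : E →L[ℝ] ℝ,
          Filter.Tendsto (fun n => φ (u (σ n))) Filter.atTop (nhds (φ z)))
    (X : Set E) (hne : X.Nonempty) (hclosed : IsClosed X) (hconv : Convex ℝ X)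
    (hunb : ¬ Bornology.IsBounded X)
    (f : E → E) (hf : Set.MapsTo f X X)
    (hwsc : ∀ x ∈ X, ∀ xn : ℕ → E, (∀ n, xn n ∈ X) →
      (∀ φ : E →L[ℝ] ℝ,
        Filter.Tendsto (fun n => φ (xn n)) Filter.atTop (nhds (φ x))) →
      Filter.Tendsto (fun n => f (xn n)) Filter.atTop (nhds (f x)))
    (hgrowth : ∃ c < (1 : ℝ) / 2, ∃ R > (0 : ℝ),
      ∀ x ∈ X, R ≤ ‖x‖ → ‖f x‖ ≤ c * ‖x‖)
    (huniq : ∀ y ∈ X, ∀ x₁ ∈ X, ∀ x₂ ∈ X,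
      (∀ x ∈ X, ‖x₁ - f x₁‖ - ‖y - f x₁‖ ≤ ‖x - f x‖ - ‖y - f x‖) →
      (∀ x ∈ X, ‖x₂ - f x₂‖ - ‖y - f x₂‖ ≤ ‖x - f x‖ - ‖y - f x‖) →
      x₁ = x₂) :
    ∃! xs, xs ∈ X ∧ f xs = xs ∧
      ∀ x ∈ X, x ≠ xs → ‖xs - f x‖ < ‖x - f x‖ :=
  stmt11_general hrefl X hne hclosed hconv f hf hwsc hgrowth huniq
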